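/- For 0 < a < 1 and b > 0, the EDLiD PMF f(x;a,b) = (Λ(x+1;a,b) - Λ(x;a,b))/(1 - log a)^b is nonnegative for every nonnegative integer x and sums to 1 over x ∈ ℕ₀. -/

import Mathlib

open Filter Topology

/-- The function Λ(x;a,b) = (1 - a^x + ((1+x)a^x - 1) log a)^b. -/
noncomputable def Lam (a b : ℝ) (x : ℕ) : ℝ :=
  (1 - a ^ x + ((1 + (x : ℝ)) * a ^ x - 1) * Real.log a) ^ b

/-- PMF of the exponentiated discrete Lindley distribution (EDLiD). -/
noncomputable def f (a b : ℝ) (x : ℕ) : ℝ :=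
  (Lam a b (x + 1) - Lam a b x) / (1 - Real.log a) ^ b

/-! `Λ = G ^ b` with `G = lindleyBase a`, and `G(x) / (1 - log a)` is the CDF of the discrete
Lindley distribution: `G` increases from `G 0 = 0` to the limit `1 - log a`. Hence `f` is the sequence of increments of an
increasing sequence running from `0` to `1`, and its series telescopes. -/

theorem Monotone.hasSum_sub_of_tendsto {F : ℕ → ℝ} {L : ℝ} (hF : Monotone F)
    (hL : Tendsto F atTop (𝓝 L)) : HasSum (fun n => F (n + 1) - F n) (L - F 0) := by
  rw [hasSum_iff_tendsto_nat_of_nonneg fun n => sub_nonneg.mpr (hF n.le_succ)]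
  simpa only [Finset.sum_range_sub] using hL.sub_const (F 0)

noncomputable def lindleyBase (a : ℝ) (x : ℕ) : ℝ :=
  1 - a ^ x + ((1 + (x : ℝ)) * a ^ x - 1) * Real.log a

theorem lam_eq_lindleyBase_rpow (a b : ℝ) (x : ℕ) : Lam a b x = lindleyBase a x ^ b := rfl

theorem lindleyBase_zero (a : ℝ) : lindleyBase a 0 = 0 := by simp [lindleyBase]

theorem lindleyBase_succ_sub (a : ℝ) (x : ℕ) :
    lindleyBase a (x + 1) - lindleyBase a x =
      a ^ x * ((1 - a + a * Real.log a) + (x + 1) * (1 - a) * -Real.log a) := by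
  simp only [lindleyBase, pow_succ, Nat.cast_succ]
  ring

theorem lindleyBase_monotone {a : ℝ} (ha0 : 0 < a) (ha1 : a < 1) : Monotone (lindleyBase a) := by
  refine monotone_nat_of_le_succ fun x => sub_nonneg.mp ?_
  have hlog : Real.log a < 0 := Real.log_neg ha0 ha1
  have hconst : 0 ≤ 1 - a + a * Real.log a := by
    have := mul_le_mul_of_nonneg_left (Real.one_sub_inv_le_log_of_pos ha0) ha0.le
    rw [mul_sub, mul_inv_cancel₀ ha0.ne'] at this
    linarith
  rw [lindleyBase_succ_sub]
  have : 0 ≤ ((x : ℝ) + 1) * (1 - a) * -Real.log a := by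
    have := x.cast_nonneg (α := ℝ)
    apply mul_nonneg (mul_nonneg _ _) _ <;> linarith
  positivity

theorem lindleyBase_nonneg {a : ℝ} (ha0 : 0 < a) (ha1 : a < 1) (x : ℕ) : 0 ≤ lindleyBase a x :=
  lindleyBase_zero a ▸ lindleyBase_monotone ha0 ha1 x.zero_le

theorem tendsto_lindleyBase {a : ℝ} (ha0 : 0 ≤ a) (ha1 : a < 1) :
    Tendsto (lindleyBase a) atTop (𝓝 (1 - Real.log a)) := by
  have hpow := tendsto_pow_atTop_nhds_zero_of_lt_one ha0 ha1
  have hmul := tendsto_self_mul_const_pow_of_lt_one ha0 ha1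
  have := ((tendsto_const_nhds (x := (1 : ℝ))).sub hpow).add
    (((hpow.add hmul).sub_const 1).mul_const (Real.log a))
  convert this using 2
  · simp only [lindleyBase]
    ring
  · ring

theorem stmt6 (a b : ℝ) (ha0 : 0 < a) (ha1 : a < 1) (hb : 0 < b) :
    (∀ x : ℕ, 0 ≤ f a b x) ∧ HasSum (fun x : ℕ => f a b x) 1 := by
  have hnorm : 0 < (1 - Real.log a) ^ b :=
    Real.rpow_pos_of_pos (by linarith [Real.log_neg ha0 ha1]) b
  have hmono : Monotone (Lam a b) := fun x y hxy => by
    simp only [lam_eq_lindleyBase_rpow]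
    exact Real.rpow_le_rpow (lindleyBase_nonneg ha0 ha1 x)
      (lindleyBase_monotone ha0 ha1 hxy) hb.le
  have hzero : Lam a b 0 = 0 := by
    rw [lam_eq_lindleyBase_rpow, lindleyBase_zero, Real.zero_rpow hb.ne']
  have hlim : Tendsto (Lam a b) atTop (𝓝 ((1 - Real.log a) ^ b)) :=
    (tendsto_lindleyBase ha0.le ha1).rpow_const (Or.inr hb.le)
  refine ⟨fun x => div_nonneg (sub_nonneg.mpr (hmono x.le_succ)) hnorm.le, ?_⟩
  have := (hmono.hasSum_sub_of_tendsto hlim).div_const ((1 - Real.log a) ^ b)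
  rwa [hzero, sub_zero, div_self hnorm.ne'] at this
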